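/- Let h : V → ℝ satisfy min_{V} h < 0 < max_{V} h (h changes sign) and ∫_V h dμ < 0. Then inf_{u : V → ℝ} max_{x∈V} ( Δu(x) + h(x)e^{u(x)} ) < 0. -/
import Mathlib


open Finset Real Filter Topology

/-- The (μ-)Laplacian of `u` at vertex `x` on a finite weighted graph. -/
noncomputable def graphLap {V : Type*} [Fintype V] (ω : V → V → ℝ) (μ : V → ℝ)
    (u : V → ℝ) (x : V) : ℝ :=
  (1 / μ x) * ∑ y, ω x y * (u y - u x)

/-- Connectedness: any two vertices are joined by a path of adjacent vertices. -/
def graphConnected {V : Type*} [Fintype V] (ω : V → V → ℝ) : Prop :=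
  ∀ x y : V, ∃ (n : ℕ) (p : ℕ → V), p 0 = x ∧ p n = y ∧ ∀ i < n, 0 < ω (p i) (p (i + 1))

/-- Maximum of a real function on a finite nonempty vertex set. -/
noncomputable def maxV {V : Type*} [Fintype V] [Nonempty V] (f : V → ℝ) : ℝ :=
  Finset.univ.sup' Finset.univ_nonempty f

/-- Minimum of a real function on a finite nonempty vertex set. -/
noncomputable def minV {V : Type*} [Fintype V] [Nonempty V] (f : V → ℝ) : ℝ :=
  Finset.univ.inf' Finset.univ_nonempty f

section Aux

variable {V : Type*} [Fintype V] [Nonempty V]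

/-- The Laplacian as a linear map. -/
noncomputable def lapLin (ω : V → V → ℝ) (μ : V → ℝ) : (V → ℝ) →ₗ[ℝ] (V → ℝ) where
  toFun u := fun x => graphLap ω μ u x
  map_add' u v := by
    funext x
    have key : ∀ y, ω x y * ((u y + v y) - (u x + v x))
        = ω x y * (u y - u x) + ω x y * (v y - v x) := fun y => by ring
    simp only [graphLap, Pi.add_apply, key, Finset.sum_add_distrib]
    ring
  map_smul' c u := by
    funext x
    have key : ∀ y, ω x y * (c * u y - c * u x) = c * (ω x y * (u y - u x)) := fun y => by ring
    simp only [graphLap, Pi.smul_apply, smul_eq_mul, RingHom.id_apply, key, ← Finset.mul_sum]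
    ring

@[simp] lemma lapLin_apply (ω : V → V → ℝ) (μ : V → ℝ) (u : V → ℝ) (x : V) :
    lapLin ω μ u x = graphLap ω μ u x := rfl

/-- The mean functional as a linear map. -/
noncomputable def meanLin (μ : V → ℝ) : (V → ℝ) →ₗ[ℝ] ℝ where
  toFun g := ∑ x, g x * μ x
  map_add' g1 g2 := by simp [add_mul, Finset.sum_add_distrib]
  map_smul' c g := by simp [Finset.mul_sum, mul_assoc]

@[simp] lemma meanLin_apply (μ : V → ℝ) (g : V → ℝ) :
    meanLin μ g = ∑ x, g x * μ x := rfl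

variable (ω : V → V → ℝ) (μ : V → ℝ)

lemma mu_lap (hμ : ∀ x, 0 < μ x) (u : V → ℝ) (x : V) :
    μ x * graphLap ω μ u x = ∑ y, ω x y * (u y - u x) := by
  unfold graphLap
  rw [← mul_assoc, mul_one_div, div_self (hμ x).ne', one_mul]

lemma sum_mu_lap (hsymm : ∀ x y, ω x y = ω y x) (hμ : ∀ x, 0 < μ x) (u : V → ℝ) :
    ∑ x, μ x * graphLap ω μ u x = 0 := by
  simp only [mu_lap ω μ hμ, mul_sub, Finset.sum_sub_distrib]
  rw [sub_eq_zero]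
  conv_lhs => rw [Finset.sum_comm]
  exact Finset.sum_congr rfl fun a _ => Finset.sum_congr rfl fun b _ => by rw [hsymm]

lemma lap_ker_const (hsymm : ∀ x y, ω x y = ω y x) (hnonneg : ∀ x y, 0 ≤ ω x y)
    (hconn : graphConnected ω) (hμ : ∀ x, 0 < μ x) (u : V → ℝ)
    (hu : ∀ x, graphLap ω μ u x = 0) (x y : V) : u x = u y := by
  have hz : ∀ x, ∑ y, ω x y * (u y - u x) = 0 := by
    intro x
    rw [← mu_lap ω μ hμ, hu x, mul_zero]
  set Q := ∑ x, ∑ y, ω x y * (u y - u x) * u x with hQ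
  have hQ0 : Q = 0 := by
    rw [hQ]
    apply Finset.sum_eq_zero
    intro x _
    rw [← Finset.sum_mul, hz, zero_mul]
  have hswap : (∑ x, ∑ y, ω x y * (u y - u x) * u y) = -Q := by
    have hneg : -Q = ∑ x, ∑ y, -(ω x y * (u y - u x) * u x) := by
      simp [hQ]
    rw [hneg]
    conv_lhs => rw [Finset.sum_comm]
    exact Finset.sum_congr rfl fun a _ => Finset.sum_congr rfl fun b _ => by
      rw [hsymm b a]; ring
  have hE : ∑ x, ∑ y, ω x y * (u y - u x) ^ 2 = 0 := by
    have expand : ∀ x y : V, ω x y * (u y - u x) ^ 2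
        = ω x y * (u y - u x) * u y - ω x y * (u y - u x) * u x := fun x y => by ring
    simp only [expand, Finset.sum_sub_distrib]
    rw [hswap, ← hQ, hQ0]
    ring
  have hterm : ∀ a b : V, 0 < ω a b → u b = u a := by
    intro a b hab
    have houter := (Finset.sum_eq_zero_iff_of_nonneg (fun x _ =>
      Finset.sum_nonneg fun y _ => mul_nonneg (hnonneg x y) (sq_nonneg _))).mp hE
    have hinner := (Finset.sum_eq_zero_iff_of_nonneg (fun y _ =>
      mul_nonneg (hnonneg a y) (sq_nonneg _))).mp (houter a (Finset.mem_univ a))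
    have h0 := hinner b (Finset.mem_univ b)
    have h2 : (u b - u a) ^ 2 = 0 := by
      rcases mul_eq_zero.mp h0 with h | h
      · exact absurd h hab.ne'
      · exact h
    have h3 : u b - u a = 0 := by
      exact pow_eq_zero_iff (two_ne_zero) |>.mp h2
    linarith
  obtain ⟨n, p, hp0, hpn, hstep⟩ := hconn x y
  have hall : ∀ i, i ≤ n → u (p i) = u x := by
    intro i
    induction i with
    | zero => intro _; rw [hp0]
    | succ k ih =>
      intro hk
      have hk' : k < n := Nat.lt_of_succ_le hk
      rw [hterm (p k) (p (k + 1)) (hstep k hk'), ih (Nat.le_of_lt hk')]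
  rw [← hpn]
  exact (hall n le_rfl).symm

lemma surj_meanzero (hsymm : ∀ x y, ω x y = ω y x) (hnonneg : ∀ x y, 0 ≤ ω x y)
    (hconn : graphConnected ω) (hμ : ∀ x, 0 < μ x) (f : V → ℝ)
    (hf : ∑ x, f x * μ x = 0) : ∃ w : V → ℝ, ∀ x, graphLap ω μ w x = f x := by
  classical
  have hker : LinearMap.ker (lapLin ω μ) = Submodule.span ℝ {(fun _ => 1 : V → ℝ)} := by
    ext u
    simp only [LinearMap.mem_ker, Submodule.mem_span_singleton]
    constructor
    · intro hu
      have hu' : ∀ x, graphLap ω μ u x = 0 := fun x => congrFun hu x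
      refine ⟨u (Classical.arbitrary V), funext fun x => ?_⟩
      simp only [Pi.smul_apply, smul_eq_mul, mul_one]
      exact lap_ker_const ω μ hsymm hnonneg hconn hμ u hu' (Classical.arbitrary V) x
    · rintro ⟨c, rfl⟩
      have hcf : (c • (fun _ => 1 : V → ℝ)) = fun _ => c := by
        funext z; simp
      funext z
      rw [hcf]
      show graphLap ω μ (fun _ => c) z = 0
      simp [graphLap]
  have hone : (fun _ => (1 : ℝ) : V → ℝ) ≠ 0 := by
    intro hc
    have := congrFun hc (Classical.arbitrary V)
    norm_num at this
  have hkrank : Module.finrank ℝ (LinearMap.ker (lapLin ω μ)) = 1 := by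
    rw [hker, finrank_span_singleton hone]
  have hSpos : (0 : ℝ) < ∑ x, μ x := Finset.sum_pos (fun x _ => hμ x) Finset.univ_nonempty
  have hφsurj : Function.Surjective (meanLin μ (V := V)) := by
    intro r
    refine ⟨(r / ∑ x, μ x) • ((fun _ => 1) : V → ℝ), ?_⟩
    simp only [meanLin_apply, Pi.smul_apply, smul_eq_mul, mul_one, ← Finset.mul_sum]
    exact div_mul_cancel₀ _ hSpos.ne'
  have hrank2 : Module.finrank ℝ (LinearMap.range (lapLin ω μ))
      = Module.finrank ℝ (LinearMap.ker (meanLin μ (V := V))) := by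
    have h1 := LinearMap.finrank_range_add_finrank_ker (lapLin ω μ (V := V))
    have h2 := LinearMap.finrank_range_add_finrank_ker (meanLin μ (V := V))
    have h3 : Module.finrank ℝ (LinearMap.range (meanLin μ (V := V))) = 1 := by
      rw [LinearMap.range_eq_top.mpr hφsurj]
      simp
    omega
  have hle : LinearMap.range (lapLin ω μ) ≤ LinearMap.ker (meanLin μ (V := V)) := by
    rintro g ⟨u, rfl⟩
    simp only [LinearMap.mem_ker, meanLin_apply, lapLin_apply]
    calc ∑ x, graphLap ω μ u x * μ x = ∑ x, μ x * graphLap ω μ u x :=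
          Finset.sum_congr rfl fun x _ => by ring
      _ = 0 := sum_mu_lap ω μ hsymm hμ u
  have heq : LinearMap.range (lapLin ω μ) = LinearMap.ker (meanLin μ (V := V)) :=
    Submodule.eq_of_le_of_finrank_eq hle hrank2
  have hmem : f ∈ LinearMap.range (lapLin ω μ) := by
    rw [heq]
    simpa [LinearMap.mem_ker] using hf
  obtain ⟨w, hw⟩ := hmem
  exact ⟨w, fun x => congrFun hw x⟩

end Aux

/-- Negativity of the critical constant for the Kazdan-Warner nonlinearity. -/
theorem stmt_17 {V : Type*} [Fintype V] [Nonempty V]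
    (ω : V → V → ℝ) (μ : V → ℝ)
    (hsymm : ∀ x y, ω x y = ω y x)
    (hnonneg : ∀ x y, 0 ≤ ω x y)
    (hconn : graphConnected ω)
    (hμ : ∀ x, 0 < μ x)
    (h : V → ℝ)
    (hmin : minV h < 0)
    (hmax : 0 < maxV h)
    (hint : ∑ x, h x * μ x < 0) :
    ∃ u : V → ℝ, maxV (fun x => graphLap ω μ u x + h x * Real.exp (u x)) < 0 := by
  classical
  have hSpos : (0 : ℝ) < ∑ x, μ x := Finset.sum_pos (fun x _ => hμ x) Finset.univ_nonempty
  set c : ℝ := (∑ x, h x * μ x) / (∑ x, μ x) with hc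
  have hcneg : c < 0 := div_neg_of_neg_of_pos hint hSpos
  have hf : ∑ x, (c - h x) * μ x = 0 := by
    have hcS : c * (∑ x, μ x) = ∑ x, h x * μ x := div_mul_cancel₀ _ hSpos.ne'
    simp only [sub_mul, Finset.sum_sub_distrib, ← Finset.mul_sum]
    rw [hcS, sub_self]
  obtain ⟨w, hw⟩ := surj_meanzero ω μ hsymm hnonneg hconn hμ (fun x => c - h x) hf
  -- choose small ε > 0
  have hev : ∀ᶠ ε : ℝ in 𝓝 0, ∀ x, c + h x * (Real.exp (ε * w x) - 1) < 0 := by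
    rw [Filter.eventually_all]
    intro x
    have hcont : Continuous fun ε : ℝ => c + h x * (Real.exp (ε * w x) - 1) := by
      continuity
    have ht : Tendsto (fun ε : ℝ => c + h x * (Real.exp (ε * w x) - 1)) (𝓝 0) (𝓝 c) := by
      have := hcont.tendsto 0
      simpa using this
    exact ht.eventually_lt_const hcneg
  have hev' : ∀ᶠ ε : ℝ in 𝓝[>] (0 : ℝ), ∀ x, c + h x * (Real.exp (ε * w x) - 1) < 0 :=
    hev.filter_mono nhdsWithin_le_nhds
  have hpos : ∀ᶠ ε : ℝ in 𝓝[>] (0 : ℝ), 0 < ε := eventually_mem_nhdsWithin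
  obtain ⟨ε, hεpos, hεlt⟩ := (hpos.and hev').exists
  refine ⟨fun x => ε * w x + Real.log ε, ?_⟩
  rw [maxV, Finset.sup'_lt_iff]
  intro x _
  have hlap : graphLap ω μ (fun y => ε * w y + Real.log ε) x = ε * (c - h x) := by
    have key : ∀ y, ω x y * ((ε * w y + Real.log ε) - (ε * w x + Real.log ε))
        = ε * (ω x y * (w y - w x)) := fun y => by ring
    rw [← hw x]
    simp only [graphLap, key, ← Finset.mul_sum]
    ring
  have hexp : Real.exp (ε * w x + Real.log ε) = Real.exp (ε * w x) * ε := by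
    rw [Real.exp_add, Real.exp_log hεpos]
  simp only [hlap, hexp]
  calc ε * (c - h x) + h x * (Real.exp (ε * w x) * ε)
      = ε * (c + h x * (Real.exp (ε * w x) - 1)) := by ring
    _ < 0 := mul_neg_of_pos_of_neg hεpos (hεlt x)
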